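/- Assume the outside option setup (𝒜_N = {a₀}), the full domain 𝒟 = 2^𝒜 ∖ {∅}, and that 𝒳 has at least 2|𝒜_A| + 1 elements. For every integer n with 2 ≤ n < |𝒜_A| + 1: (i) ρ^≻_𝓔 ∈ RU(n) for every linear order ≻ on 𝒜 and every collection 𝓔 ⊆ 𝒟 (deterministic menu-effect behavior is rationalizable); and (ii) RU(n) is not a convex set. -/

import Mathlib

open Finset

noncomputable section

/-- A ranking (strict linear order) on a finite type `T`, encoded as a bijection with
`Fin (Fintype.card T)`; a lower index means a better alternative. -/
abbrev Ranking (T : Type) [Fintype T] : Type := T ≃ Fin (Fintype.card T)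

/-- `x` is strictly preferred to `y` according to the ranking `r`. -/
def Ranking.pref {T : Type} [Fintype T] (r : Ranking T) (x y : T) : Prop :=
  r x < r y

/-- The `r`-best (most preferred) element of a nonempty finite set `D`. -/
def Ranking.best {T : Type} [Fintype T] [DecidableEq T] (r : Ranking T) (D : Finset T)
    (hD : D.Nonempty) : T :=
  r.symm ((D.image fun x => r x).min' (hD.image fun x => r x))

/-- `μ` is a probability distribution on the finite type `T`. -/
def IsDistr {T : Type} [Fintype T] (μ : T → ℝ) : Prop :=
  (∀ t, 0 ≤ μ t) ∧ (∑ t, μ t) = 1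

open Classical in
/-- The probability of the event `P` under the distribution `μ`. -/
def probOf {T : Type} [Fintype T] (μ : T → ℝ) (P : T → Prop) : ℝ :=
  ∑ t, if P t then μ t else 0

/-- `ρ` is a stochastic choice function on the domain `𝒟`: on every menu of the domain it is
nonnegative, sums to one over the menu, and vanishes outside the menu. -/
def IsSCF {A : Type} [Fintype A] [DecidableEq A] (𝒟 : Finset (Finset A))
    (ρ : Finset A → A → ℝ) : Prop :=
  ∀ B ∈ 𝒟, (∀ a ∈ B, 0 ≤ ρ B a) ∧ ((∑ a ∈ B, ρ B a) = 1) ∧ (∀ a ∉ B, ρ B a = 0)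

/-- An aggregation correspondence for the set `AN` of non-atomic aggregates: pairwise disjoint
nonempty sets of underlying alternatives, singletons exactly on atomic aggregates. -/
structure AggCorr (A 𝒳 : Type) [Fintype A] [DecidableEq A] [Fintype 𝒳] [DecidableEq 𝒳]
    (AN : Finset A) where
  X : A → Finset 𝒳
  disj : ∀ a b, a ≠ b → Disjoint (X a) (X b)
  atomic : ∀ a ∉ AN, (X a).card = 1
  nonatomic : ∀ a ∈ AN, 2 ≤ (X a).card

/-- `lam` is a composition distribution for the aggregation correspondence `Xc` on the domain
`𝒟`: for every menu `B ∈ 𝒟` it is a probability distribution over profiles `S` of nonempty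
subsets `S a ⊆ X a`. -/
def IsCompDistr {A 𝒳 : Type} [Fintype A] [DecidableEq A] [Fintype 𝒳] [DecidableEq 𝒳]
    {AN : Finset A} (Xc : AggCorr A 𝒳 AN) (𝒟 : Finset (Finset A))
    (lam : Finset A → (A → Finset 𝒳) → ℝ) : Prop :=
  ∀ B ∈ 𝒟, IsDistr (lam B) ∧
    ∀ S : A → Finset 𝒳, lam B S ≠ 0 → ∀ a, S a ⊆ Xc.X a ∧ (S a).Nonempty

/-- The pair `(μ, lam)` (for the aggregation correspondence `Xc`) rationalizes `ρ` on `𝒟`. -/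
def Rationalizes {A 𝒳 : Type} [Fintype A] [DecidableEq A] [Fintype 𝒳] [DecidableEq 𝒳]
    {AN : Finset A} (Xc : AggCorr A 𝒳 AN) (𝒟 : Finset (Finset A))
    (μ : Ranking 𝒳 → ℝ) (lam : Finset A → (A → Finset 𝒳) → ℝ)
    (ρ : Finset A → A → ℝ) : Prop :=
  IsDistr μ ∧ IsCompDistr Xc 𝒟 lam ∧
    ∀ B ∈ 𝒟, ∀ a ∈ B,
      ρ B a = ∑ S : A → Finset 𝒳, lam B S *
        probOf μ (fun r => ∃ x ∈ S a, ∀ b ∈ B, b ≠ a → ∀ y ∈ S b, Ranking.pref r x y)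

/-- RU-rationality: some pair `(μ, lam)` for some aggregation correspondence with underlying
alternatives `𝒳` and non-atomic aggregates `AN` rationalizes `ρ`. -/
def RURational (𝒳 : Type) [Fintype 𝒳] [DecidableEq 𝒳] {A : Type} [Fintype A] [DecidableEq A]
    (AN : Finset A) (𝒟 : Finset (Finset A)) (ρ : Finset A → A → ℝ) : Prop :=
  ∃ Xc : AggCorr A 𝒳 AN, ∃ μ lam, Rationalizes Xc 𝒟 μ lam ρ

/-- ARU-rationality: `ρ` is a random utility model over the aggregates themselves. -/
def ARURational {A : Type} [Fintype A] [DecidableEq A]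
    (𝒟 : Finset (Finset A)) (ρ : Finset A → A → ℝ) : Prop :=
  ∃ μA : Ranking A → ℝ, IsDistr μA ∧
    ∀ B ∈ 𝒟, ∀ a ∈ B, ρ B a = probOf μA (fun r => ∀ b ∈ B, b ≠ a → Ranking.pref r a b)

/-- Partial RU-rationality: on menus of atomic aggregates only, `ρ` is a random utility model
over linear orders on the atomic aggregates `AA`. -/
def PartialRURational {A : Type} [Fintype A] [DecidableEq A]
    (AA : Finset A) (𝒟 : Finset (Finset A)) (ρ : Finset A → A → ℝ) : Prop :=
  ∃ ν : Ranking {c : A // c ∈ AA} → ℝ, IsDistr ν ∧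
    ∀ B ∈ 𝒟, ∀ (hB : B ⊆ AA), ∀ a, ∀ (ha : a ∈ B),
      ρ B a = probOf ν (fun r =>
        ∀ b : {c : A // c ∈ AA}, (b : A) ∈ B → (b : A) ≠ a → Ranking.pref r ⟨a, hB ha⟩ b)

/-- Limited Monotonicity (outside-option form): adding the outside option `a0` to a menu of
atomic aggregates weakly decreases every atomic choice frequency. -/
def LimitedMono {A : Type} [Fintype A] [DecidableEq A]
    (a0 : A) (AA : Finset A) (𝒟 : Finset (Finset A)) (ρ : Finset A → A → ℝ) : Prop :=
  ∀ D : Finset A, D ⊆ AA → D ∈ 𝒟 → insert a0 D ∈ 𝒟 →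
    ∀ b ∈ D, ρ (insert a0 D) b ≤ ρ D b

/-- Limited Monotonicity (general form): adding any set `E` of non-atomic aggregates to a menu
of atomic aggregates weakly decreases every atomic choice frequency. -/
def LimitedMonoGen {A : Type} [Fintype A] [DecidableEq A]
    (AA AN : Finset A) (𝒟 : Finset (Finset A)) (ρ : Finset A → A → ℝ) : Prop :=
  ∀ D E : Finset A, D ⊆ AA → E ⊆ AN → D ∈ 𝒟 → D ∪ E ∈ 𝒟 →
    ∀ b ∈ D, ρ (D ∪ E) b ≤ ρ D b

/-- The full domain: all nonempty subsets of `A`. -/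
def fullDomain (A : Type) [Fintype A] [DecidableEq A] : Finset (Finset A) :=
  Finset.univ.filter fun D => D.Nonempty

/-- The deterministic "menu-effect" stochastic choice function `ρ^≻_𝓔`: it puts probability 1
on the `r`-maximum of `D` if `a0 ∉ D` or `D ∈ E`, and probability 1 on `a0` otherwise. -/
def vertexSCF {A : Type} [Fintype A] [DecidableEq A]
    (a0 : A) (r : Ranking A) (E : Finset (Finset A)) : Finset A → A → ℝ :=
  fun D a =>
    if h : D.Nonempty then
      if a0 ∉ D ∨ D ∈ E then (if a = Ranking.best r D h then 1 else 0)
      else (if a = a0 then 1 else 0)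
    else 0

open Classical in
/-- The deterministic menu-effect stochastic choice function with multiple non-atomic
aggregates: on a menu `D` belonging to `E b` (for the necessarily unique such `b`, the
collections being pairwise disjoint) it puts probability 1 on `b`; otherwise it puts
probability 1 on the `r`-maximum of `D`. -/
def vertexSCFM {A : Type} [Fintype A] [DecidableEq A]
    (r : Ranking A) (E : A → Finset (Finset A)) : Finset A → A → ℝ :=
  fun D a =>
    if h : D.Nonempty then
      if hex : ∃ b, D ∈ E b then (if a = Classical.choose hex then 1 else 0)
      else (if a = Ranking.best r D h then 1 else 0)
    else 0

/-- Restriction of a choice function to the coordinates `(D, a)` with `D ∈ 𝒟`, viewed as a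
vector in `ℝ^(Finset A × A)`. -/
def restrictTo {A : Type} [Fintype A] [DecidableEq A] (𝒟 : Finset (Finset A))
    (ρ : Finset A → A → ℝ) : Finset A × A → ℝ :=
  fun p => if p.1 ∈ 𝒟 then ρ p.1 p.2 else 0

/-- `RU(n)` (outside-option setup): `ρ` is rationalized by some pair whose aggregation
correspondence satisfies `|X(a0)| = n`. -/
def RUn (𝒳 : Type) [Fintype 𝒳] [DecidableEq 𝒳] {A : Type} [Fintype A] [DecidableEq A]
    (a0 : A) (𝒟 : Finset (Finset A)) (n : ℕ) (ρ : Finset A → A → ℝ) : Prop :=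
  ∃ Xc : AggCorr A 𝒳 ({a0} : Finset A), (Xc.X a0).card = n ∧
    ∃ μ lam, Rationalizes Xc 𝒟 μ lam ρ

/-- `RU((n_a))`: `ρ` is rationalized by some pair whose aggregation correspondence satisfies
`|X(a)| = nv a` for every non-atomic aggregate `a`. -/
def RUvec (𝒳 : Type) [Fintype 𝒳] [DecidableEq 𝒳] {A : Type} [Fintype A] [DecidableEq A]
    (AN : Finset A) (𝒟 : Finset (Finset A)) (nv : A → ℕ) (ρ : Finset A → A → ℝ) : Prop :=
  ∃ Xc : AggCorr A 𝒳 AN, (∀ a ∈ AN, (Xc.X a).card = nv a) ∧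
    ∃ μ lam, Rationalizes Xc 𝒟 μ lam ρ

/-- `μ` is non-overlapping for `Xc`: in every ranking in the support of `μ`, the underlying
alternatives of each non-atomic aggregate occupy adjacent positions. -/
def NonOverlapping {A 𝒳 : Type} [Fintype A] [DecidableEq A] [Fintype 𝒳] [DecidableEq 𝒳]
    {AN : Finset A} (Xc : AggCorr A 𝒳 AN) (μ : Ranking 𝒳 → ℝ) : Prop :=
  ∀ r : Ranking 𝒳, μ r ≠ 0 → ∀ a ∈ AN, ∀ y ∈ Xc.X a, ∀ z ∈ Xc.X a, ∀ x : 𝒳,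
    Ranking.pref r y x → Ranking.pref r x z → x ∈ Xc.X a

/-- `lam` is menu-independent: there is a single (unconditional) probability distribution over
full profiles whose marginal on the coordinates of each menu `B ∈ 𝒟` coincides with `lam B`. -/
def MenuIndependent {A 𝒳 : Type} [Fintype A] [DecidableEq A] [Fintype 𝒳] [DecidableEq 𝒳]
    {AN : Finset A} (Xc : AggCorr A 𝒳 AN) (𝒟 : Finset (Finset A))
    (lam : Finset A → (A → Finset 𝒳) → ℝ) : Prop :=
  ∃ lamBar : (A → Finset 𝒳) → ℝ, IsDistr lamBar ∧
    (∀ S : A → Finset 𝒳, lamBar S ≠ 0 → ∀ a, S a ⊆ Xc.X a ∧ (S a).Nonempty) ∧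
    ∀ B ∈ 𝒟, ∀ S0 : A → Finset 𝒳,
      probOf (lam B) (fun S => ∀ b ∈ B, S b = S0 b)
        = probOf lamBar (fun S => ∀ b ∈ B, S b = S0 b)

/-- Squared Euclidean distance between two stochastic choice functions on the coordinates of
the domain `𝒟`. -/
def distSq {A : Type} [Fintype A] [DecidableEq A] (𝒟 : Finset (Finset A))
    (ρ ρ' : Finset A → A → ℝ) : ℝ :=
  ∑ B ∈ 𝒟, ∑ a ∈ B, (ρ B a - ρ' B a) ^ 2

/-!
(i) A single ranking of `𝒳` suffices. Each atom gets one alternative, ordered as in `≻`; the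
outside option `a0` gets the top alternative and `n - 1` alternatives below all atoms. On a menu,
`a0` is represented by its top alternative when `ρ^≻_𝓔` chooses it and by a bottom one otherwise.

(ii) Take a set `T` of `n` atoms containing `x` and `y ≠ x`. For `t ∈ T` let `o t` rank `t` first,
`x` second and `a0` last, and let `E t` contain every menu except `{a0, x}` and `{a0, x, t}`.
Suppose the uniform mixture of the `ρ^{o t}_{E t}` were rationalized with `|X(a0)| = n`. For every
`t` some ranking `r_t` of the support puts `t` above all of `T`. Since `t` is never chosen from
`{a0, x, t}`, the composition of `a0` there contains some `w_t` above `t` in `r_t`. Since adding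
`a0` to `{x, j}` or to `{y}` does not lower the probability of `x` resp. `y`, the composition of
`a0` on `{a0, x, j}` lies below `x` whenever `x` beats `j`, and on `{a0, y}` it lies below `y`.
This separates the `w_t` from one another and from an element of `a0`'s composition on `{a0, y}`,
so `X(a0)` has at least `n + 1` alternatives.
-/

theorem eq_of_forall_lt_of_forall_lt {α β : Type*} [Preorder β] {B : Finset α} {k : α → β}
    {c d : α} (hc : c ∈ B) (hd : d ∈ B) (hcmin : ∀ b ∈ B, b ≠ c → k c < k b)
    (hdmin : ∀ b ∈ B, b ≠ d → k d < k b) : c = d := by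
  by_contra h
  exact lt_asymm (hcmin d hd (Ne.symm h)) (hdmin c hc h)

namespace Ranking

variable {T : Type} [Fintype T] (r : Ranking T)

theorem pref_asymm {x y : T} (h : r.pref x y) : ¬ r.pref y x :=
  lt_asymm h

theorem pref_trans {x y z : T} : r.pref x y → r.pref y z → r.pref x z :=
  lt_trans

theorem pref_or_pref_of_ne {x y : T} (h : x ≠ y) : r.pref x y ∨ r.pref y x :=
  lt_or_gt_of_ne (r.injective.ne h)

variable [DecidableEq T]

theorem best_mem (D : Finset T) (hD : D.Nonempty) : r.best D hD ∈ D := by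
  obtain ⟨b, hb, he⟩ := mem_image.mp (min'_mem _ (hD.image fun x => r x))
  rwa [best, ← he, Equiv.symm_apply_apply]

theorem pref_best {D : Finset T} {hD : D.Nonempty} {b : T} (hb : b ∈ D)
    (hne : b ≠ r.best D hD) : r.pref (r.best D hD) b := by
  have hmin : r (r.best D hD) = (D.image fun x => r x).min' (hD.image fun x => r x) := by
    rw [best, Equiv.apply_symm_apply]
  refine lt_of_le_of_ne ?_ (r.injective.ne hne.symm)
  rw [hmin]
  exact min'_le _ _ (mem_image_of_mem _ hb)

theorem best_eq_of_forall_pref {D : Finset T} {hD : D.Nonempty} {c : T} (hc : c ∈ D)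
    (h : ∀ b ∈ D, b ≠ c → r.pref c b) : r.best D hD = c :=
  eq_of_forall_lt_of_forall_lt (r.best_mem D hD) hc (fun _ hb hne => r.pref_best hb hne) h

end Ranking

theorem exists_ranking_of_tier {T : Type} [Fintype T] (tier : T → ℕ) :
    ∃ r : Ranking T, ∀ x y, tier x < tier y → r.pref x y := by
  let key : T → ℕ ×ₗ Fin (Fintype.card T) := fun x => toLex (tier x, Fintype.equivFin T x)
  have hkey : Function.Injective key := fun x y h =>
    (Fintype.equivFin T).injective (congrArg Prod.snd (toLex.injective h))
  let _ : LinearOrder T := LinearOrder.lift' key hkey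
  refine ⟨(monoEquivOfFin T rfl).symm.toEquiv, fun x y hxy => ?_⟩
  show (monoEquivOfFin T rfl).symm x < (monoEquivOfFin T rfl).symm y
  rw [OrderIso.lt_iff_lt]
  exact Prod.Lex.toLex_lt_toLex.mpr (Or.inl hxy)

section Probability

open Classical

variable {T : Type} [Fintype T] {μ : T → ℝ}

theorem probOf_nonneg (hμ : ∀ t, 0 ≤ μ t) (P : T → Prop) : 0 ≤ probOf μ P :=
  sum_nonneg fun t _ => by split_ifs <;> simp [hμ t]

theorem probOf_mono (hμ : ∀ t, 0 ≤ μ t) {P Q : T → Prop} (h : ∀ t, P t → Q t) :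
    probOf μ P ≤ probOf μ Q :=
  sum_le_sum fun t _ => by
    by_cases hP : P t
    · simp [hP, h t hP]
    · by_cases hQ : Q t <;> simp [hP, hQ, hμ t]

theorem of_probOf_eq (hμ : ∀ t, 0 ≤ μ t) {P Q : T → Prop} (hPQ : ∀ t, P t → Q t)
    (h : probOf μ P = probOf μ Q) : ∀ t, μ t ≠ 0 → Q t → P t := by
  intro t ht hQ
  have hle : ∀ s ∈ univ, (if P s then μ s else 0) ≤ if Q s then μ s else 0 := fun s _ => by
    by_cases hP : P s
    · simp [hP, hPQ s hP]
    · by_cases hQ : Q s <;> simp [hP, hQ, hμ s]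
  by_contra hP
  have := (sum_eq_sum_iff_of_le hle).mp h t (mem_univ t)
  simp only [hP, hQ, if_false, if_true] at this
  exact ht this.symm

theorem not_of_probOf_eq_zero (hμ : ∀ t, 0 ≤ μ t) {P : T → Prop} (h : probOf μ P = 0) :
    ∀ t, μ t ≠ 0 → ¬ P t :=
  fun t ht hP => of_probOf_eq hμ (P := fun _ => False) (fun _ h => h.elim)
    (by rw [h]; simp [probOf]) t ht hP

theorem exists_of_probOf_pos {P : T → Prop} (h : 0 < probOf μ P) : ∃ t, μ t ≠ 0 ∧ P t := by
  by_contra! hc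
  refine h.ne' (sum_eq_zero fun t _ => ?_)
  by_cases hP : P t
  · rw [if_pos hP]
    by_contra hne
    exact hc t hne hP
  · rw [if_neg hP]

theorem probOf_pi_single [DecidableEq T] (t₀ : T) (P : T → Prop) :
    probOf (Pi.single t₀ 1) P = if P t₀ then 1 else 0 := by
  rw [probOf, sum_eq_single t₀ (fun t _ ht => by simp [ht]) (by simp)]
  simp

end Probability

theorem isDistr_pi_single {T : Type} [Fintype T] [DecidableEq T] (t₀ : T) :
    IsDistr (Pi.single t₀ (1 : ℝ)) :=
  ⟨fun t => by by_cases h : t = t₀ <;> simp [h], by simp⟩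

theorem exists_ne_zero_of_isDistr {T : Type} [Fintype T] {μ : T → ℝ} (hμ : IsDistr μ) :
    ∃ t, μ t ≠ 0 := by
  by_contra! h
  simpa [h] using hμ.2

theorem eq_of_sum_mul_eq {ι : Type*} [Fintype ι] {w f g : ι → ℝ} (hw : ∀ i, 0 ≤ w i)
    (hfg : ∀ i, f i ≤ g i) (h : ∑ i, w i * f i = ∑ i, w i * g i) (i : ι) (hi : w i ≠ 0) :
    f i = g i :=
  mul_left_cancel₀ hi <| (sum_eq_sum_iff_of_le fun j _ =>
    mul_le_mul_of_nonneg_left (hfg j) (hw j)).mp h i (mem_univ i)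

theorem eq_of_le_sum_mul {ι : Type} [Fintype ι] {w f : ι → ℝ} {v : ℝ} (hw : IsDistr w)
    (h : v ≤ ∑ i, w i * f i) (hf : ∀ i, f i ≤ v) (i : ι) (hi : w i ≠ 0) : f i = v := by
  refine eq_of_sum_mul_eq hw.1 hf (le_antisymm ?_ ?_) i hi
  · exact sum_le_sum fun j _ => mul_le_mul_of_nonneg_left (hf j) (hw.1 j)
  · rwa [← sum_mul, hw.2, one_mul]

theorem eq_zero_of_sum_mul_eq_zero {ι : Type*} [Fintype ι] {w f : ι → ℝ} (hw : ∀ i, 0 ≤ w i)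
    (h : ∑ i, w i * f i = 0) (hf : ∀ i, 0 ≤ f i) (i : ι) (hi : w i ≠ 0) : f i = 0 :=
  (eq_of_sum_mul_eq hw hf (by simp [h]) i hi).symm

theorem mem_fullDomain {A : Type} [Fintype A] [DecidableEq A] {B : Finset A} :
    B ∈ fullDomain A ↔ B.Nonempty := by
  simp [fullDomain]

section VertexChoice

variable {A : Type} [Fintype A] [DecidableEq A] (a0 : A) (r : Ranking A) (E : Finset (Finset A))

/-- The alternative on which `vertexSCF a0 r E` puts probability one (`a0` on the empty menu). -/
def vertexChoice (B : Finset A) : A :=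
  if hB : B.Nonempty then (if a0 ∉ B ∨ B ∈ E then r.best B hB else a0) else a0

variable {a0 r E} {B : Finset A}

theorem vertexSCF_eq (hB : B.Nonempty) (c : A) :
    vertexSCF a0 r E B c = if c = vertexChoice a0 r E B then 1 else 0 := by
  unfold vertexSCF vertexChoice
  rw [dif_pos hB, dif_pos hB]
  split_ifs <;> rfl

theorem vertexChoice_mem (hB : B.Nonempty) : vertexChoice a0 r E B ∈ B := by
  unfold vertexChoice
  rw [dif_pos hB]
  split_ifs with h
  · exact r.best_mem B hB
  · exact not_not.mp (not_or.mp h).1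

theorem vertexChoice_of_not_mem (hB : B.Nonempty) (h : a0 ∉ B ∨ B ∈ E) :
    vertexChoice a0 r E B = r.best B hB := by
  rw [vertexChoice, dif_pos hB, if_pos h]

theorem vertexChoice_eq_outside (hB : B.Nonempty) (h0 : a0 ∈ B) (hE : B ∉ E) :
    vertexChoice a0 r E B = a0 := by
  rw [vertexChoice, dif_pos hB, if_neg (by tauto)]

theorem pref_vertexChoice (hne : vertexChoice a0 r E B ≠ a0) {b : A} (hb : b ∈ B)
    (hbc : b ≠ vertexChoice a0 r E B) : r.pref (vertexChoice a0 r E B) b := by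
  have hB : B.Nonempty := ⟨b, hb⟩
  have h : a0 ∉ B ∨ B ∈ E := by
    by_contra h
    rw [not_or, not_not] at h
    exact hne (vertexChoice_eq_outside hB h.1 h.2)
  rw [vertexChoice_of_not_mem hB h] at hbc ⊢
  exact r.pref_best hb hbc

theorem isSCF_vertexSCF : IsSCF (fullDomain A) (vertexSCF a0 r E) := by
  intro B hB
  rw [mem_fullDomain] at hB
  simp_rw [vertexSCF_eq hB]
  refine ⟨fun a _ => by split_ifs <;> norm_num, ?_, fun a ha => ?_⟩
  · rw [sum_ite_eq' B, if_pos (vertexChoice_mem hB)]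
  · exact if_neg fun h : a = _ => ha (h ▸ vertexChoice_mem hB)

end VertexChoice

section Positions

variable {𝒳 : Type} [Fintype 𝒳]

def posSet (I : Finset ℕ) : Finset 𝒳 :=
  univ.filter fun x => (Fintype.equivFin 𝒳 x : ℕ) ∈ I

theorem mem_posSet {I : Finset ℕ} {x : 𝒳} : x ∈ posSet I ↔ (Fintype.equivFin 𝒳 x : ℕ) ∈ I := by
  simp [posSet]

theorem posSet_mono {I J : Finset ℕ} (h : I ⊆ J) : (posSet I : Finset 𝒳) ⊆ posSet J :=
  fun _ hx => mem_posSet.mpr (h (mem_posSet.mp hx))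

theorem disjoint_posSet {I J : Finset ℕ} (h : Disjoint I J) :
    Disjoint (posSet I : Finset 𝒳) (posSet J) :=
  disjoint_filter.mpr fun _ _ hI hJ => disjoint_left.mp h hI hJ

theorem card_posSet {I : Finset ℕ} (hI : ∀ i ∈ I, i < Fintype.card 𝒳) :
    (posSet I : Finset 𝒳).card = I.card :=
  card_bij (fun x _ => (Fintype.equivFin 𝒳 x : ℕ)) (fun _ hx => mem_posSet.mp hx)
    (fun _ _ _ _ h => (Fintype.equivFin 𝒳).injective (Fin.ext h))
    (fun i hi => ⟨(Fintype.equivFin 𝒳).symm ⟨i, hI i hi⟩, by simp [mem_posSet, hi], by simp⟩)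

theorem exists_pref_posSet_iff {A : Type} {B : Finset A} {k : A → ℕ}
    (hk : ∀ a, k a < Fintype.card 𝒳) (c : A) :
    (∃ x ∈ (posSet {k c} : Finset 𝒳), ∀ b ∈ B, b ≠ c → ∀ y ∈ (posSet {k b} : Finset 𝒳),
      Ranking.pref (Fintype.equivFin 𝒳) x y) ↔ ∀ b ∈ B, b ≠ c → k c < k b := by
  simp only [mem_posSet, mem_singleton, Ranking.pref, Fin.lt_def]
  constructor
  · rintro ⟨x, hx, h⟩ b hb hbc
    simpa [hx] using h b hb hbc ((Fintype.equivFin 𝒳).symm ⟨k b, hk b⟩) (by simp)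
  · intro h
    refine ⟨(Fintype.equivFin 𝒳).symm ⟨k c, hk c⟩, by simp, fun b hb hbc y hy => ?_⟩
    simpa [hy] using h b hb hbc

end Positions

section MenuEffect

variable {A : Type} [Fintype A] [DecidableEq A] (a0 : A) (r : Ranking A) (n : ℕ)
  (ch : Finset A → A)

/-- Indices, in the reference ranking `Fintype.equivFin 𝒳`, of the alternatives of `X a`. -/
def menuEffectIdx (a : A) : Finset ℕ :=
  if a = a0 then insert 0 (Ico (Fintype.card A + 1) (Fintype.card A + n)) else {(r a : ℕ) + 1}

/-- Index of the single alternative that `a` contributes on the menu `B`: the top one of `a0`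
when `a0` is to be chosen, the highest one below all atoms otherwise. -/
def menuEffectKey (B : Finset A) (a : A) : ℕ :=
  if a = a0 then (if ch B = a0 then 0 else Fintype.card A + 1) else (r a : ℕ) + 1

variable {a0 r n}

theorem lt_of_mem_menuEffectIdx (hn : 0 < n) {a : A} {i : ℕ} (hi : i ∈ menuEffectIdx a0 r n a) :
    i < Fintype.card A + n := by
  unfold menuEffectIdx at hi
  have := (r a).isLt
  split_ifs at hi
  · rcases mem_insert.mp hi with h | h
    · omega
    · exact (mem_Ico.mp h).2
  · rw [mem_singleton.mp hi]
    omega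

theorem disjoint_menuEffectIdx {a b : A} (hab : a ≠ b) :
    Disjoint (menuEffectIdx a0 r n a) (menuEffectIdx a0 r n b) := by
  have key : ∀ a b : A, a ≠ b → b ≠ a0 →
      Disjoint (menuEffectIdx a0 r n a) (menuEffectIdx a0 r n b) := by
    intro a b hab hb
    have := (r a).isLt
    have := (r b).isLt
    have hr : (r a : ℕ) ≠ r b := fun h => hab (r.injective (Fin.ext h))
    unfold menuEffectIdx
    split_ifs
    all_goals simp [Finset.disjoint_left]
    all_goals omega
  by_cases hb : b = a0
  · exact (key b a hab.symm (hb ▸ hab)).symm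
  · exact key a b hab hb

theorem card_menuEffectIdx_outside (hn : 0 < n) : (menuEffectIdx a0 r n a0).card = n := by
  rw [menuEffectIdx, if_pos rfl, card_insert_of_notMem (by simp), Nat.card_Ico]
  omega

theorem menuEffectKey_mem (h2 : 2 ≤ n) (B : Finset A) (a : A) :
    menuEffectKey a0 r ch B a ∈ menuEffectIdx a0 r n a := by
  unfold menuEffectKey menuEffectIdx
  split_ifs <;> simp
  omega

variable {ch}

theorem menuEffectKey_lt_menuEffectKey {B : Finset A}
    (hch : ch B ≠ a0 → ∀ b ∈ B, b ≠ ch B → b ≠ a0 → r.pref (ch B) b) {b : A} (hb : b ∈ B)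
    (hbc : b ≠ ch B) : menuEffectKey a0 r ch B (ch B) < menuEffectKey a0 r ch B b := by
  unfold menuEffectKey
  by_cases h0 : ch B = a0
  · simp [h0, show b ≠ a0 from h0 ▸ hbc]
  · have := (r (ch B)).isLt
    by_cases hb0 : b = a0
    · simp [h0, hb0]
    · simp only [h0, hb0, if_false, add_lt_add_iff_right]
      exact hch h0 b hb hbc hb0

end MenuEffect

theorem RUn_of_deterministic {A 𝒳 : Type} [Fintype A] [DecidableEq A] [Fintype 𝒳]
    [DecidableEq 𝒳] {a0 : A} {n : ℕ} (hN : Fintype.card A + n ≤ Fintype.card 𝒳) (h2 : 2 ≤ n)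
    (r : Ranking A) {ch : Finset A → A} (hmem : ∀ B : Finset A, B.Nonempty → ch B ∈ B)
    (hbest : ∀ B : Finset A, ch B ≠ a0 → ∀ b ∈ B, b ≠ ch B → b ≠ a0 → r.pref (ch B) b)
    {ρ : Finset A → A → ℝ}
    (hρ : ∀ B : Finset A, B.Nonempty → ∀ a, ρ B a = if a = ch B then 1 else 0) :
    RUn 𝒳 a0 (fullDomain A) n ρ := by
  have hlt : ∀ a, ∀ i ∈ menuEffectIdx a0 r n a, i < Fintype.card 𝒳 := fun _ _ hi =>
    (lt_of_mem_menuEffectIdx (by omega) hi).trans_le hN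
  have hkey_lt : ∀ B a, menuEffectKey a0 r ch B a < Fintype.card 𝒳 := fun B a =>
    hlt a _ (menuEffectKey_mem ch h2 B a)
  let Xc : AggCorr A 𝒳 {a0} :=
    { X := fun a => posSet (menuEffectIdx a0 r n a)
      disj := fun _ _ hab => disjoint_posSet (disjoint_menuEffectIdx hab)
      atomic := fun a ha => by
        rw [card_posSet (hlt a), menuEffectIdx, if_neg (by simpa using ha), card_singleton]
      nonatomic := fun a ha => by
        rw [mem_singleton.mp ha, card_posSet (hlt a0), card_menuEffectIdx_outside (by omega)]
        exact h2 }
  refine ⟨Xc, (card_posSet (hlt a0)).trans (card_menuEffectIdx_outside (by omega)),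
    Pi.single (Fintype.equivFin 𝒳) 1,
    fun B => Pi.single (fun a => posSet {menuEffectKey a0 r ch B a}) 1, isDistr_pi_single _,
    fun B _ => ⟨isDistr_pi_single _, fun S hS a => ?_⟩, fun B hB c hc => ?_⟩
  · obtain rfl : S = fun a => posSet {menuEffectKey a0 r ch B a} := by
      by_contra h
      simp [h] at hS
    exact ⟨posSet_mono (singleton_subset_iff.mpr (menuEffectKey_mem ch h2 B a)),
      ⟨(Fintype.equivFin 𝒳).symm ⟨_, hkey_lt B a⟩, by simp [mem_posSet]⟩⟩
  · rw [mem_fullDomain] at hB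
    have hchoice : (∀ b ∈ B, b ≠ c → menuEffectKey a0 r ch B c < menuEffectKey a0 r ch B b) ↔
        c = ch B :=
      ⟨fun h => eq_of_forall_lt_of_forall_lt hc (hmem B hB) h
        fun b hb hbc => menuEffectKey_lt_menuEffectKey (hbest B) hb hbc,
       fun h => h ▸ fun b hb hbc => menuEffectKey_lt_menuEffectKey (hbest B) hb hbc⟩
    simp only [hρ B hB, Pi.single_apply, ite_mul, one_mul, zero_mul, sum_ite_eq', mem_univ,
      if_true, probOf_pi_single, exists_pref_posSet_iff (hkey_lt B), hchoice]

theorem RUn_vertexSCF {A 𝒳 : Type} [Fintype A] [DecidableEq A] [Fintype 𝒳] [DecidableEq 𝒳]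
    {a0 : A} {n : ℕ} (hN : Fintype.card A + n ≤ Fintype.card 𝒳) (h2 : 2 ≤ n) (r : Ranking A)
    (E : Finset (Finset A)) : RUn 𝒳 a0 (fullDomain A) n (vertexSCF a0 r E) :=
  RUn_of_deterministic hN h2 r (fun _ hB => vertexChoice_mem hB)
    (fun _ hne _ hb hbc _ => pref_vertexChoice hne hb hbc) (fun _ hB => vertexSCF_eq hB)

section BeatsAtoms

variable {A 𝒳 : Type} [Fintype 𝒳]

/-- `xel b` stands for the unique alternative of the atomic aggregate `b`. -/
def BeatsAtoms (a0 : A) (xel : A → 𝒳) (r : Ranking 𝒳) (B : Finset A) (c : A) : Prop :=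
  ∀ b ∈ B, b ≠ c → b ≠ a0 → r.pref (xel c) (xel b)

variable {a0 : A} {xel : A → 𝒳} {r : Ranking 𝒳} {B B' : Finset A} {c : A}

theorem BeatsAtoms.mono (h : BeatsAtoms a0 xel r B c) (hB : B' ⊆ B) :
    BeatsAtoms a0 xel r B' c :=
  fun b hb => h b (hB hb)

theorem beatsAtoms_insert_outside [DecidableEq A] :
    BeatsAtoms a0 xel r (insert a0 B) c ↔ BeatsAtoms a0 xel r B c := by
  simp [BeatsAtoms]

end BeatsAtoms

section Rationalization

variable {A 𝒳 : Type} [Fintype A] [DecidableEq A] [Fintype 𝒳] [DecidableEq 𝒳] {a0 : A}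
  {xel : A → 𝒳} {r : Ranking 𝒳} {B B' : Finset A} {c : A}

theorem AggCorr.exists_atom_singletons (Xc : AggCorr A 𝒳 {a0}) :
    ∃ xel : A → 𝒳, ∀ b, b ≠ a0 → Xc.X b = {xel b} := by
  obtain ⟨x0, -⟩ := card_pos.mp (two_pos.trans_le (Xc.nonatomic a0 (mem_singleton_self a0)))
  have : ∀ b, ∃ x : 𝒳, b ≠ a0 → Xc.X b = {x} := fun b => by
    by_cases hb : b = a0
    · exact ⟨x0, fun h => (h hb).elim⟩
    · obtain ⟨x, hx⟩ := card_eq_one.mp (Xc.atomic b (by simpa using hb))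
      exact ⟨x, fun _ => hx⟩
  choose xel hxel using this
  exact ⟨xel, hxel⟩

variable {Xc : AggCorr A 𝒳 {a0}} (hxel : ∀ b, b ≠ a0 → Xc.X b = {xel b})
include hxel

theorem xel_injOn {b : A} (hb : b ≠ a0) (hc : c ≠ a0) (h : xel b = xel c) : b = c := by
  by_contra hbc
  exact disjoint_left.mp (Xc.disj b c hbc) (show xel b ∈ Xc.X b by simp [hxel, hb])
    (by simp [hxel, hc, h])

theorem ne_xel_of_mem_outside {u : 𝒳} (hc : c ≠ a0) (hu : u ∈ Xc.X a0) : u ≠ xel c := by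
  rintro rfl
  exact disjoint_left.mp (Xc.disj a0 c (Ne.symm hc)) hu (by simp [hxel, hc])

theorem exists_pref_iff_beatsAtoms {S : A → Finset 𝒳}
    (hS : ∀ a, S a ⊆ Xc.X a ∧ (S a).Nonempty) (hc : c ≠ a0) (r : Ranking 𝒳) :
    (∃ x ∈ S c, ∀ b ∈ B, b ≠ c → ∀ y ∈ S b, r.pref x y) ↔
      BeatsAtoms a0 xel r B c ∧ (a0 ∈ B → ∀ u ∈ S a0, r.pref (xel c) u) := by
  have hSb : ∀ b, b ≠ a0 → S b = {xel b} := fun b hb =>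
    (hS b).2.subset_singleton_iff.mp (hxel b hb ▸ (hS b).1)
  rw [hSb c hc]
  simp only [mem_singleton, exists_eq_left]
  constructor
  · intro h
    exact ⟨fun b hb hbc hb0 => h b hb hbc _ (by simp [hSb b hb0]),
      fun h0 u hu => h a0 h0 (Ne.symm hc) u hu⟩
  · rintro ⟨h1, h2⟩ b hb hbc y hy
    by_cases hb0 : b = a0
    · subst hb0
      exact h2 hb y hy
    · rw [hSb b hb0, mem_singleton] at hy
      exact hy ▸ h1 b hb hbc hb0

variable {𝒟 : Finset (Finset A)} {μ : Ranking 𝒳 → ℝ} {lam : Finset A → (A → Finset 𝒳) → ℝ}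
  {ρ : Finset A → A → ℝ} (h : Rationalizes Xc 𝒟 μ lam ρ)
include h

theorem choice_eq_sum_probOf (hB : B ∈ 𝒟) (hc : c ∈ B) (hc0 : c ≠ a0) :
    ρ B c = ∑ S, lam B S * probOf μ (fun r =>
      BeatsAtoms a0 xel r B c ∧ (a0 ∈ B → ∀ u ∈ S a0, r.pref (xel c) u)) := by
  rw [h.2.2 B hB c hc]
  refine sum_congr rfl fun S _ => ?_
  by_cases hS : lam B S = 0
  · simp [hS]
  · simp_rw [exists_pref_iff_beatsAtoms hxel ((h.2.1 B hB).2 S hS) hc0]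

theorem choice_eq_probOf_of_not_mem (hB : B ∈ 𝒟) (h0 : a0 ∉ B) (hc : c ∈ B) :
    ρ B c = probOf μ (fun r => BeatsAtoms a0 xel r B c) := by
  rw [choice_eq_sum_probOf hxel h hB hc (ne_of_mem_of_not_mem hc h0)]
  simp only [h0, IsEmpty.forall_iff, and_true]
  rw [← sum_mul, (h.2.1 B hB).1.2, one_mul]

theorem exists_ranking_of_choice_pos (hB : B ∈ 𝒟) (h0 : a0 ∉ B) (hc : c ∈ B)
    (hpos : 0 < ρ B c) : ∃ r, μ r ≠ 0 ∧ BeatsAtoms a0 xel r B c :=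
  exists_of_probOf_pos (choice_eq_probOf_of_not_mem hxel h hB h0 hc ▸ hpos)

theorem beatsAtoms_of_choice_eq (hB : B ∈ 𝒟) (hB' : B' ∈ 𝒟) (h0 : a0 ∉ B) (hsub : B' ⊆ B)
    (hc : c ∈ B') (heq : ρ B c = ρ B' c) (hr : μ r ≠ 0)
    (hbeats : BeatsAtoms a0 xel r B' c) : BeatsAtoms a0 xel r B c :=
  of_probOf_eq h.1.1 (P := fun r => BeatsAtoms a0 xel r B c)
    (Q := fun r => BeatsAtoms a0 xel r B' c) (fun _ hbt => BeatsAtoms.mono hbt hsub)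
    (by rw [← choice_eq_probOf_of_not_mem hxel h hB h0 (hsub hc),
      ← choice_eq_probOf_of_not_mem hxel h hB' (fun h => h0 (hsub h)) hc, heq]) r hr hbeats

theorem pref_outside_of_choice_insert_eq (hB : B ∈ 𝒟) (hB' : insert a0 B ∈ 𝒟) (h0 : a0 ∉ B)
    (hc : c ∈ B) (heq : ρ (insert a0 B) c = ρ B c) {S : A → Finset 𝒳}
    (hS : lam (insert a0 B) S ≠ 0) (hr : μ r ≠ 0) (hbeats : BeatsAtoms a0 xel r B c) :
    ∀ u ∈ S a0, r.pref (xel c) u := by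
  have hle : probOf μ (fun r => BeatsAtoms a0 xel r (insert a0 B) c) ≤ ρ (insert a0 B) c := by
    simp_rw [beatsAtoms_insert_outside]
    rw [heq, choice_eq_probOf_of_not_mem hxel h hB h0 hc]
  have hsum := choice_eq_sum_probOf hxel h hB' (mem_insert_of_mem hc) (ne_of_mem_of_not_mem hc h0)
  have hS_max := eq_of_le_sum_mul (h.2.1 _ hB').1 (hle.trans_eq hsum)
    (fun _ => probOf_mono h.1.1 fun _ h => h.1) S hS
  exact (of_probOf_eq h.1.1 (fun _ h => h.1) hS_max r hr
    (beatsAtoms_insert_outside.mpr hbeats)).2 (mem_insert_self _ _)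

theorem exists_outside_pref_of_choice_eq_zero (hB : B ∈ 𝒟) (hc : c ∈ B) (hc0 : c ≠ a0)
    (hzero : ρ B c = 0) {S : A → Finset 𝒳} (hS : lam B S ≠ 0) (hr : μ r ≠ 0)
    (hbeats : BeatsAtoms a0 xel r B c) : ∃ u ∈ S a0, r.pref u (xel c) := by
  have hS0 := eq_zero_of_sum_mul_eq_zero (h.2.1 B hB).1.1
    (hzero ▸ choice_eq_sum_probOf hxel h hB hc hc0).symm (fun _ => probOf_nonneg h.1.1 _) S hS
  obtain ⟨u, hu, hnp⟩ : ∃ u ∈ S a0, ¬ r.pref (xel c) u := by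
    by_contra! hall
    exact not_of_probOf_eq_zero h.1.1 hS0 r hr ⟨hbeats, fun _ => hall⟩
  have hne := ne_xel_of_mem_outside hxel hc0 (((h.2.1 B hB).2 S hS a0).1 hu)
  exact ⟨u, hu, (r.pref_or_pref_of_ne hne).resolve_right hnp⟩

end Rationalization

theorem card_add_one_le_of_separated {ι α : Type*} [DecidableEq α] {T : Finset ι} {x : ι}
    {w : ι → α} {U : ι → Finset α} {V X : Finset α} (hwU : ∀ t ∈ T, w t ∈ U t)
    (hsep : ∀ t ∈ T, ∀ j ∈ T, j ≠ x → t ≠ j → w t ∉ U j) (hV : V.Nonempty)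
    (hwV : ∀ t ∈ T, w t ∉ V) (hUX : ∀ t ∈ T, U t ⊆ X) (hVX : V ⊆ X) : #T + 1 ≤ #X := by
  obtain ⟨v, hv⟩ := hV
  have hinj : Set.InjOn w T := by
    intro t ht t' ht' hw
    by_contra hne
    by_cases htx : t = x
    · exact hsep t ht t' ht' (fun h => hne (htx.trans h.symm)) hne (hw ▸ hwU t' ht')
    · exact hsep t' ht' t ht htx (Ne.symm hne) (hw ▸ hwU t ht)
  have hv_new : v ∉ T.image w := fun hv' => by
    obtain ⟨t, ht, rfl⟩ := mem_image.mp hv'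
    exact hwV t ht hv
  calc #T + 1 = #(insert v (T.image w)) := by
        rw [card_insert_of_notMem hv_new, card_image_of_injOn hinj]
    _ ≤ #X := card_le_card <| insert_subset (hVX hv) <|
        image_subset_iff.mpr fun t ht => hUX t ht (hwU t ht)

section OutsideBound

variable {A 𝒳 : Type} [Fintype A] [DecidableEq A] [Fintype 𝒳] [DecidableEq 𝒳] {a0 : A}
  {Xc : AggCorr A 𝒳 {a0}} {xel : A → 𝒳} (hxel : ∀ b, b ≠ a0 → Xc.X b = {xel b})
  {μ : Ranking 𝒳 → ℝ} {lam : Finset A → (A → Finset 𝒳) → ℝ} {ρ : Finset A → A → ℝ}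
  (h : Rationalizes Xc (fullDomain A) μ lam ρ) {T : Finset A} (hT : a0 ∉ T) {x : A} (hx : x ∈ T)
include hxel h hT hx

theorem pref_of_beatsAtoms_of_choice_pair_eq {j t : A} (hj : j ∈ T) (hjx : j ≠ x) (ht : t ∈ T)
    (htj : t ≠ j) (hpair : ρ {x, j} j = ρ T j) {r : Ranking 𝒳} (hr : μ r ≠ 0)
    (hbeats : BeatsAtoms a0 xel r T t) : r.pref (xel x) (xel j) := by
  have hne0 : ∀ b ∈ T, b ≠ a0 := fun b hb h => hT (h ▸ hb)
  have hsub : {x, j} ⊆ T := insert_subset hx (singleton_subset_iff.mpr hj)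
  have hxj : xel x ≠ xel j := fun he => hjx (xel_injOn hxel (hne0 x hx) (hne0 j hj) he).symm
  refine (r.pref_or_pref_of_ne hxj).resolve_right fun hjx' => ?_
  have hpair_beats : BeatsAtoms a0 xel r {x, j} j := fun b hb hbj _ => by
    rcases mem_insert.mp hb with rfl | hb
    · exact hjx'
    · exact absurd (mem_singleton.mp hb) hbj
  have hall := beatsAtoms_of_choice_eq hxel h (mem_fullDomain.mpr ⟨x, hx⟩)
    (mem_fullDomain.mpr ⟨x, mem_insert_self _ _⟩) hT hsub (by simp) hpair.symm hr hpair_beats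
  exact r.pref_asymm (hbeats j hj (Ne.symm htj) (hne0 j hj)) (hall t ht htj (hne0 t ht))

theorem pref_outside_of_beatsAtoms {j t : A} (hj : j ∈ T) (hjx : j ≠ x) (ht : t ∈ T) (htj : t ≠ j)
    (hpair : ρ {x, j} j = ρ T j) (hinsert_x : ρ (insert a0 {x, j}) x = ρ {x, j} x)
    {S : A → Finset 𝒳} (hS : lam (insert a0 {x, j}) S ≠ 0) {r : Ranking 𝒳} (hr : μ r ≠ 0)
    (hbeats : BeatsAtoms a0 xel r T t) : ∀ u ∈ S a0, r.pref (xel x) u := by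
  have hxj : BeatsAtoms a0 xel r {x, j} x := fun b hb hbx _ => by
    rw [show b = j by simpa [hbx] using hb]
    exact pref_of_beatsAtoms_of_choice_pair_eq hxel h hT hx hj hjx ht htj hpair hr hbeats
  have h0 : a0 ∉ ({x, j} : Finset A) := fun h0 =>
    hT (insert_subset hx (singleton_subset_iff.mpr hj) h0)
  exact pref_outside_of_choice_insert_eq hxel h (mem_fullDomain.mpr (insert_nonempty _ _))
    (mem_fullDomain.mpr (insert_nonempty _ _)) h0 (mem_insert_self _ _) hinsert_x hS hr hxj

theorem card_add_one_le_card_outside {y : A} (hy : y ∈ T)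
    (hpos : ∀ t ∈ T, 0 < ρ T t)
    (hpair : ∀ j ∈ T, j ≠ x → ρ {x, j} j = ρ T j)
    (hinsert_x : ∀ j ∈ T, j ≠ x → ρ (insert a0 {x, j}) x = ρ {x, j} x)
    (hinsert_j : ∀ j ∈ T, ρ (insert a0 {x, j}) j = 0)
    (hinsert_y : ρ {a0, y} y = ρ {y} y) : #T + 1 ≤ #(Xc.X a0) := by
  have hD : ∀ {B : Finset A}, B.Nonempty → B ∈ fullDomain A := mem_fullDomain.mpr
  have hsupp : ∀ B : Finset A, B.Nonempty → ∀ S, lam B S ≠ 0 → ∀ a,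
      S a ⊆ Xc.X a ∧ (S a).Nonempty := fun B hB => (h.2.1 B (hD hB)).2
  have hne0 : ∀ b ∈ T, b ≠ a0 := fun b hb h => hT (h ▸ hb)
  have : Nonempty (Ranking 𝒳) := ⟨Fintype.equivFin 𝒳⟩
  have : Nonempty 𝒳 := ⟨xel x⟩
  choose! rk hrk0 hrk using fun t ht =>
    exists_ranking_of_choice_pos hxel h (hD ⟨x, hx⟩) hT ht (hpos t ht)
  choose S hS using fun j =>
    exists_ne_zero_of_isDistr (h.2.1 (insert a0 {x, j}) (hD (insert_nonempty _ _))).1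
  obtain ⟨S', hS'⟩ := exists_ne_zero_of_isDistr (h.2.1 {a0, y} (hD (insert_nonempty _ _))).1
  choose! w hwS hw using fun t ht =>
    exists_outside_pref_of_choice_eq_zero hxel h (hD (insert_nonempty _ _)) (by simp)
      (hne0 t ht) (hinsert_j t ht) (hS t) (hrk0 t ht)
      (beatsAtoms_insert_outside.mpr ((hrk t ht).mono (insert_subset hx (by simpa using ht))))
  have hw_beats : ∀ t ∈ T, ∀ b ∈ T, (rk t).pref (w t) (xel b) := fun t ht b hb => by
    by_cases hbt : b = t
    · exact hbt ▸ hw t ht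
    · exact (rk t).pref_trans (hw t ht) (hrk t ht b hb hbt (hne0 b hb))
  have hsep : ∀ t ∈ T, ∀ j ∈ T, j ≠ x → t ≠ j → w t ∉ S j a0 := fun t ht j hj hjx htj hwj =>
    (rk t).pref_asymm (hw_beats t ht x hx) <| pref_outside_of_beatsAtoms hxel h hT hx hj hjx ht
      htj (hpair j hj hjx) (hinsert_x j hj hjx) (hS j) (hrk0 t ht) (hrk t ht) (w t) hwj
  have hsep_last : ∀ t ∈ T, w t ∉ S' a0 := fun t ht hwt =>
    (rk t).pref_asymm (hw_beats t ht y hy) <| pref_outside_of_choice_insert_eq hxel h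
      (hD (singleton_nonempty y)) (hD (insert_nonempty _ _)) (by simpa using (hne0 y hy).symm)
      (mem_singleton_self y) hinsert_y hS' (hrk0 t ht)
      (fun b hb hby _ => absurd (mem_singleton.mp hb) hby) (w t) hwt
  exact card_add_one_le_of_separated hwS hsep (hsupp _ (insert_nonempty _ _) S' hS' a0).2
    hsep_last (fun t _ => (hsupp _ (insert_nonempty _ _) (S t) (hS t) a0).1)
    (hsupp _ (insert_nonempty _ _) S' hS' a0).1

end OutsideBound

section Tier

variable {A : Type} [DecidableEq A]

def mixtureTier (a0 x t b : A) : ℕ :=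
  if b = t then 0 else if b = x then 1 else if b = a0 then 3 else 2

variable {a0 x t b : A}

theorem mixtureTier_self_lt (hb : b ≠ t) : mixtureTier a0 x t t < mixtureTier a0 x t b := by
  simp only [mixtureTier, hb, if_true, if_false]
  split_ifs <;> norm_num

theorem mixtureTier_second_lt (hbt : b ≠ t) (hbx : b ≠ x) :
    mixtureTier a0 x t x < mixtureTier a0 x t b := by
  simp only [mixtureTier, hbt, hbx, if_false]
  split_ifs <;> norm_num

theorem mixtureTier_lt_outside (hb : b ≠ a0) (ht : t ≠ a0) (hx : x ≠ a0) :
    mixtureTier a0 x t b < mixtureTier a0 x t a0 := by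
  simp only [mixtureTier, hb, ht.symm, hx.symm, if_false, if_true]
  split_ifs <;> norm_num

end Tier

section Mixture

variable {A : Type} [Fintype A] [DecidableEq A]

def mixtureMenus (a0 x t : A) : Finset (Finset A) :=
  univ \ {{a0, x}, {a0, x, t}}

theorem insert_mem_mixtureMenus_iff {a0 x t j : A} (hj : j ≠ a0) :
    insert a0 {x, j} ∈ mixtureMenus a0 x t ↔ j ≠ x ∧ j ≠ t := by
  simp only [mixtureMenus, mem_sdiff, mem_univ, true_and, mem_insert, mem_singleton, not_or]
  constructor
  · rintro ⟨h1, h2⟩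
    refine ⟨fun hjx => h1 (by rw [hjx, pair_eq_singleton]), fun hjt => h2 (by rw [hjt])⟩
  · rintro ⟨hjx, hjt⟩
    have hj_mem : j ∈ insert a0 ({x, j} : Finset A) := by simp
    refine ⟨fun he => ?_, fun he => ?_⟩ <;> rw [he] at hj_mem <;> simp_all

def mixtureSCF (a0 x : A) (o : A → Ranking A) (T : Finset A) : Finset A → A → ℝ :=
  ∑ t ∈ T, (#T : ℝ)⁻¹ • vertexSCF a0 (o t) (mixtureMenus a0 x t)

theorem mixtureSCF_apply {a0 x : A} {o : A → Ranking A} {T B : Finset A} (hB : B.Nonempty) (c : A) :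
    mixtureSCF a0 x o T B c =
      #{t ∈ T | c = vertexChoice a0 (o t) (mixtureMenus a0 x t) B} / #T := by
  simp only [mixtureSCF, Finset.sum_apply, Pi.smul_apply, smul_eq_mul, vertexSCF_eq hB, mul_ite,
    mul_one, mul_zero]
  rw [← sum_filter, sum_const, nsmul_eq_mul, div_eq_mul_inv]

variable {a0 x : A} {T : Finset A} (hT : a0 ∉ T) {o : A → Ranking A}
  (ho : ∀ t b c, mixtureTier a0 x t b < mixtureTier a0 x t c → (o t).pref b c)
include hT ho

theorem vertexChoice_mixture_atoms {t : A} (ht : t ∈ T) :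
    vertexChoice a0 (o t) (mixtureMenus a0 x t) T = t := by
  rw [vertexChoice_of_not_mem ⟨t, ht⟩ (Or.inl hT)]
  exact (o t).best_eq_of_forall_pref ht fun b _ hbt => ho t t b (mixtureTier_self_lt hbt)

theorem mixtureSCF_atoms_pos {t : A} (ht : t ∈ T) : 0 < mixtureSCF a0 x o T T t := by
  rw [mixtureSCF_apply ⟨t, ht⟩]
  have hmem : t ∈ T.filter fun t' => t = vertexChoice a0 (o t') (mixtureMenus a0 x t') T :=
    mem_filter.mpr ⟨ht, (vertexChoice_mixture_atoms hT ho ht).symm⟩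
  exact div_pos (Nat.cast_pos.mpr (card_pos.mpr ⟨t, hmem⟩))
    (Nat.cast_pos.mpr (card_pos.mpr ⟨t, ht⟩))

variable (hx : x ∈ T)
include hx

theorem vertexChoice_mixture_pair {t j : A} (hj : j ∈ T) :
    vertexChoice a0 (o t) (mixtureMenus a0 x t) {x, j} = if t = j then j else x := by
  have h0 : a0 ∉ ({x, j} : Finset A) := fun h => by
    rcases mem_insert.mp h with h | h
    · exact hT (h ▸ hx)
    · exact hT (mem_singleton.mp h ▸ hj)
  rw [vertexChoice_of_not_mem (insert_nonempty _ _) (Or.inl h0)]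
  split_ifs with htj
  · subst htj
    exact (o t).best_eq_of_forall_pref (by simp) fun b _ hbt => ho t t b (mixtureTier_self_lt hbt)
  · refine (o t).best_eq_of_forall_pref (mem_insert_self _ _) fun b hb hbx => ?_
    obtain rfl : b = j := by simpa [hbx] using hb
    exact ho t x b (mixtureTier_second_lt (Ne.symm htj) hbx)

theorem vertexChoice_mixture_insert_pair {t j : A} (ht : t ∈ T) (hj : j ∈ T) :
    vertexChoice a0 (o t) (mixtureMenus a0 x t) (insert a0 {x, j}) =
      if j ≠ x ∧ j ≠ t then x else a0 := by
  have hne : ∀ b ∈ T, b ≠ a0 := fun b hb h => hT (h ▸ hb)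
  split_ifs with hjt
  · rw [vertexChoice_of_not_mem (insert_nonempty _ _)
      (Or.inr ((insert_mem_mixtureMenus_iff (hne j hj)).mpr hjt))]
    refine (o t).best_eq_of_forall_pref (by simp) fun b hb hbx => ?_
    rcases mem_insert.mp hb with rfl | hb
    · exact ho t x b (mixtureTier_lt_outside (hne x hx) (hne t ht) (hne x hx))
    · obtain rfl : b = j := by simpa [hbx] using hb
      exact ho t x b (mixtureTier_second_lt hjt.2 hjt.1)
  · exact vertexChoice_eq_outside (insert_nonempty _ _) (mem_insert_self _ _)
      (mt (insert_mem_mixtureMenus_iff (hne j hj)).mp hjt)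

theorem vertexChoice_mixture_insert_singleton {t y : A} (ht : t ∈ T) (hy : y ∈ T) (hyx : y ≠ x) :
    vertexChoice a0 (o t) (mixtureMenus a0 x t) {a0, y} = y := by
  have hne : ∀ b ∈ T, b ≠ a0 := fun b hb h => hT (h ▸ hb)
  have hmem : ({a0, y} : Finset A) ∈ mixtureMenus a0 x t := by
    have hx_not : x ∉ ({a0, y} : Finset A) := by simp [hne x hx, Ne.symm hyx]
    simp only [mixtureMenus, mem_sdiff, mem_univ, true_and, mem_insert, mem_singleton, not_or]
    exact ⟨fun h => hx_not (h ▸ by simp), fun h => hx_not (h ▸ by simp)⟩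
  rw [vertexChoice_of_not_mem (insert_nonempty _ _) (Or.inr hmem)]
  refine (o t).best_eq_of_forall_pref (by simp) fun b hb hby => ?_
  obtain rfl : b = a0 := by simpa [hby] using hb
  exact ho t y b (mixtureTier_lt_outside (hne y hy) (hne t ht) (hne x hx))

theorem mixtureSCF_pair_eq_atoms {j : A} (hj : j ∈ T) (hjx : j ≠ x) :
    mixtureSCF a0 x o T {x, j} j = mixtureSCF a0 x o T T j := by
  rw [mixtureSCF_apply (insert_nonempty _ _), mixtureSCF_apply ⟨x, hx⟩]
  congr 3
  refine filter_congr fun t ht => ?_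
  rw [vertexChoice_mixture_pair hT ho hx hj, vertexChoice_mixture_atoms hT ho ht]
  split_ifs with htj
  · simp [htj]
  · simp [hjx, Ne.symm htj]

theorem mixtureSCF_insert_pair_left {j : A} (hj : j ∈ T) (hjx : j ≠ x) :
    mixtureSCF a0 x o T (insert a0 {x, j}) x = mixtureSCF a0 x o T {x, j} x := by
  have hx0 : x ≠ a0 := fun h => hT (h ▸ hx)
  rw [mixtureSCF_apply (insert_nonempty _ _), mixtureSCF_apply (insert_nonempty _ _)]
  congr 3
  refine filter_congr fun t ht => ?_
  rw [vertexChoice_mixture_insert_pair hT ho hx ht hj, vertexChoice_mixture_pair hT ho hx hj]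
  split_ifs <;> simp_all [eq_comm]

theorem mixtureSCF_insert_pair_right_eq_zero {j : A} (hj : j ∈ T) :
    mixtureSCF a0 x o T (insert a0 {x, j}) j = 0 := by
  have hj0 : j ≠ a0 := fun h => hT (h ▸ hj)
  rw [mixtureSCF_apply (insert_nonempty _ _), filter_false_of_mem fun t ht => ?_]
  · simp
  · rw [vertexChoice_mixture_insert_pair hT ho hx ht hj]
    split_ifs with h
    · exact h.1
    · exact hj0

theorem mixtureSCF_insert_singleton {y : A} (hy : y ∈ T) (hyx : y ≠ x) :
    mixtureSCF a0 x o T {a0, y} y = mixtureSCF a0 x o T {y} y := by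
  rw [mixtureSCF_apply (insert_nonempty _ _), mixtureSCF_apply (singleton_nonempty _)]
  congr 3
  refine filter_congr fun t ht => ?_
  rw [vertexChoice_mixture_insert_singleton hT ho hx ht hy hyx,
    mem_singleton.mp (vertexChoice_mem (singleton_nonempty y))]

end Mixture

theorem not_convex_RUn {A 𝒳 : Type} [Fintype A] [DecidableEq A] [Fintype 𝒳] [DecidableEq 𝒳]
    {a0 : A} {n : ℕ} (hN : Fintype.card A + n ≤ Fintype.card 𝒳) (h2 : 2 ≤ n)
    (hn : n ≤ #({a0}ᶜ : Finset A)) :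
    ¬ Convex ℝ {ρ : Finset A → A → ℝ | IsSCF (fullDomain A) ρ ∧ RUn 𝒳 a0 (fullDomain A) n ρ} := by
  intro hconv
  obtain ⟨T, hTsub, rfl⟩ := exists_subset_card_eq hn
  have hT : a0 ∉ T := fun h => by simpa using hTsub h
  obtain ⟨x, hx, y, hy, hxy⟩ := one_lt_card.mp (by omega : 1 < #T)
  choose o ho using fun t => exists_ranking_of_tier (mixtureTier a0 x t)
  have hmix : mixtureSCF a0 x o T ∈ {ρ | IsSCF (fullDomain A) ρ ∧ RUn 𝒳 a0 (fullDomain A) #T ρ} :=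
    hconv.sum_mem (fun _ _ => by positivity)
      (by rw [sum_const, nsmul_eq_mul, mul_inv_cancel₀ (by positivity)])
      fun t _ => ⟨isSCF_vertexSCF, RUn_vertexSCF hN h2 _ _⟩
  obtain ⟨-, Xc, hcard, μ, lam, h⟩ := hmix
  obtain ⟨xel, hxel⟩ := Xc.exists_atom_singletons
  have := card_add_one_le_card_outside hxel h hT hx hy
    (fun t ht => mixtureSCF_atoms_pos hT ho ht)
    (fun j hj hjx => mixtureSCF_pair_eq_atoms hT ho hx hj hjx)
    (fun j hj hjx => mixtureSCF_insert_pair_left hT ho hx hj hjx)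
    (fun j hj => mixtureSCF_insert_pair_right_eq_zero hT ho hx hj)
    (mixtureSCF_insert_singleton hT ho hx hy (Ne.symm hxy))
  omega

/-- **Remark 3.4**: for `2 ≤ n < |𝒜_A| + 1`, (i) every deterministic menu-effect choice
function `ρ^≻_𝓔` belongs to `RU(n)`, and (ii) `RU(n)` is not convex. -/
theorem stmt7 {A 𝒳 : Type} [Fintype A] [DecidableEq A] [Fintype 𝒳] [DecidableEq 𝒳]
    (a0 : A) (hX : 2 * ({a0}ᶜ : Finset A).card + 1 ≤ Fintype.card 𝒳)
    (n : ℕ) (h2 : 2 ≤ n) (hn : n < ({a0}ᶜ : Finset A).card + 1) :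
    (∀ (r : Ranking A) (E : Finset (Finset A)), E ⊆ fullDomain A →
      RUn 𝒳 a0 (fullDomain A) n (vertexSCF a0 r E)) ∧
    ¬ Convex ℝ {ρ : Finset A → A → ℝ | IsSCF (fullDomain A) ρ ∧
        RUn 𝒳 a0 (fullDomain A) n ρ} := by
  have hcardA : Fintype.card A = #({a0}ᶜ : Finset A) + 1 := by
    rw [card_compl, card_singleton, Nat.sub_add_cancel (Fintype.card_pos_iff.mpr ⟨a0⟩)]
  have hN : Fintype.card A + n ≤ Fintype.card 𝒳 := by omega
  exact ⟨fun r E _ => RUn_vertexSCF hN h2 r E, not_convex_RUn hN h2 (by omega)⟩
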